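/- arXiv:2101.07967 — 3 statements merged into one kernel-verified Lean document; each statement's English description precedes it below -/
import Mathlib

section
/- Let p(t) = ξ t³ + (η + 3ζ²) t² + ξ t + η − ζ² with ξ > 0, −ξ + √3 η > 0. Then η > 0, ξ + √3 η > 0, and √3 ξ + η + 3ζ² > 0; moreover p has no real root in the interval (1/√3, ∞). -/
/-! The cubic splits as `p t = (ξ t + η)(t² + 1) + ζ²(3t² − 1)`, and both summands are
positive once `ξ, η > 0` and `t > 1/√3`. The positivity of `η` comes from `√3 η > ξ > 0`. -/

open Real

lemma one_lt_three_mul_sq_of_inv_sqrt_three_lt {t : ℝ} (ht : 1 / √3 < t) : 1 < 3 * t ^ 2 := by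
  have hs : 0 < √3 := by positivity
  have hst : 1 < √3 * t := by rwa [div_lt_iff₀' hs] at ht
  calc (1 : ℝ) < (√3 * t) ^ 2 := by nlinarith
    _ = 3 * t ^ 2 := by rw [mul_pow, sq_sqrt (by norm_num)]

lemma cubic_eq_mul_add_sq_mul (ξ η ζ t : ℝ) :
    ξ * t ^ 3 + (η + 3 * ζ ^ 2) * t ^ 2 + ξ * t + η - ζ ^ 2
      = (ξ * t + η) * (t ^ 2 + 1) + ζ ^ 2 * (3 * t ^ 2 - 1) := by
  ring

lemma cubic_pos_of_inv_sqrt_three_lt {ξ η : ℝ} (ζ : ℝ) (hξ : 0 < ξ) (hη : 0 < η) {t : ℝ}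
    (ht : 1 / √3 < t) : 0 < ξ * t ^ 3 + (η + 3 * ζ ^ 2) * t ^ 2 + ξ * t + η - ζ ^ 2 := by
  have ht0 : 0 < t := lt_trans (by positivity) ht
  have h3t : 0 < 3 * t ^ 2 - 1 := sub_pos.mpr (one_lt_three_mul_sq_of_inv_sqrt_three_lt ht)
  rw [cubic_eq_mul_add_sq_mul]
  positivity

theorem stmt_7 (ξ η ζ : ℝ) (p : ℝ → ℝ)
    (hp : ∀ t, p t = ξ * t^3 + (η + 3*ζ^2) * t^2 + ξ * t + η - ζ^2)
    (hξ : 0 < ξ) (hη : 0 < -ξ + Real.sqrt 3 * η) :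
    0 < η ∧ 0 < ξ + Real.sqrt 3 * η ∧ 0 < Real.sqrt 3 * ξ + η + 3*ζ^2 ∧
    ∀ t : ℝ, 1 / Real.sqrt 3 < t → p t ≠ 0 := by
  have hη_pos : 0 < η := pos_of_mul_pos_right (by linarith : 0 < √3 * η) (sqrt_nonneg 3)
  refine ⟨hη_pos, by positivity, by positivity, fun t ht => ?_⟩
  rw [hp]
  exact (cubic_pos_of_inv_sqrt_three_lt ζ hξ hη_pos ht).ne'
end

section
/- Let p(t) = ξ t³ + (η+3ζ²)t² + ξ t + η − ζ² with ξ > 0, √3ξ + η + 3ζ² > 0, and ξ + √3 η > 0. Then all coefficients of p(t + 1/√3) are positive, hence p has no real root greater than 1/√3. -/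
open Real

theorem pos_of_expansion_coeffs_nonneg {p : ℝ → ℝ} {α a b c d : ℝ}
    (hshift : ∀ u, p (α + u) = a * u ^ 3 + b * u ^ 2 + c * u + d)
    (ha : 0 ≤ a) (hb : 0 ≤ b) (hc : 0 ≤ c) (hd : 0 < d) {t : ℝ} (ht : α < t) : 0 < p t := by
  have hu : 0 < t - α := sub_pos.mpr ht
  rw [← add_sub_cancel α t, hshift]
  positivity

theorem nine_mul_cubic_shift_inv_sqrt_three (ξ η ζ u : ℝ) :
    9 * (ξ * (1 / √3 + u) ^ 3 + (η + 3 * ζ ^ 2) * (1 / √3 + u) ^ 2 + ξ * (1 / √3 + u)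
      + η - ζ ^ 2) =
    9 * ξ * u ^ 3 + 9 * (√3 * ξ + η + 3 * ζ ^ 2) * u ^ 2
      + 6 * √3 * (√3 * ξ + η + 3 * ζ ^ 2) * u + 4 * √3 * (ξ + √3 * η) := by
  have hsq : √3 ^ 2 = 3 := sq_sqrt (by norm_num)
  have hinv : 1 / √3 = √3 / 3 := by
    field_simp
    exact hsq.symm
  rw [hinv]
  -- the two sides differ by `(√3 ^ 2 - 3)` times this factor
  linear_combination (ξ * √3 / 3 - 3 * ξ * u + 3 * ζ ^ 2 - 3 * η) * hsq

theorem stmt_11 (ξ η ζ : ℝ) (p : ℝ → ℝ)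
    (hp : ∀ t, p t = ξ * t^3 + (η + 3*ζ^2) * t^2 + ξ * t + η - ζ^2)
    (hξ : 0 < ξ) (hc1 : 0 < Real.sqrt 3 * ξ + η + 3*ζ^2)
    (hc : 0 < ξ + Real.sqrt 3 * η) :
    (0 < 9*ξ ∧ 0 < 9*(Real.sqrt 3 * ξ + η + 3*ζ^2) ∧
     0 < 6*Real.sqrt 3 * (Real.sqrt 3 * ξ + η + 3*ζ^2) ∧
     0 < 4*Real.sqrt 3 * (ξ + Real.sqrt 3 * η)) ∧
    ∀ t : ℝ, 1 / Real.sqrt 3 < t → p t ≠ 0 := by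
  have h3 : 0 < 9*ξ := by positivity
  have h2 : 0 < 9*(√3 * ξ + η + 3*ζ^2) := by positivity
  have h1 : 0 < 6*√3 * (√3 * ξ + η + 3*ζ^2) := by positivity
  have h0 : 0 < 4*√3 * (ξ + √3 * η) := by positivity
  refine ⟨⟨h3, h2, h1, h0⟩, fun t ht => ?_⟩
  have hshift : ∀ u, 9 * p (1 / √3 + u) = 9*ξ * u^3 + 9*(√3 * ξ + η + 3*ζ^2) * u^2
      + 6*√3 * (√3 * ξ + η + 3*ζ^2) * u + 4*√3 * (ξ + √3 * η) := fun u => by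
    rw [hp, nine_mul_cubic_shift_inv_sqrt_three]
  have hpos : 0 < 9 * p t :=
    pos_of_expansion_coeffs_nonneg (p := fun t => 9 * p t) hshift h3.le h2.le h1.le h0 ht
  exact (by linarith : 0 < p t).ne'
end

section
/- Suppose g(s) and h(s) are functions of the form g(s) = Σ a_{i,j} coshⁱ s sinhʲ s, h(s) = Σ b_{i,j} coshʲ s sinhⁱ s (sum over 1 ≤ i+j ≤ n), with a_{i,j} = b_{i,j} = 0 for all odd i+j (or for all even i+j), and suppose the pair is adapted: with t = tanh s, there is a degree-n polynomial P such that (1−t²)^{n/2} g(s) = P(t) and (1−t²)^{n/2} h(s)/tⁿ = P(1/t). If g' ≠ 0 on zeros of g and h' ≠ 0 on zeros of h, then the total number of real zeros of g plus real zeros of h is at most n. -/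
open Real

theorem stmt_13 (n : ℕ) (a b : ℕ → ℕ → ℝ)
    (hparity : (∀ i j : ℕ, (i + j) % 2 = 1 → a i j = 0 ∧ b i j = 0) ∨
               (∀ i j : ℕ, (i + j) % 2 = 0 → a i j = 0 ∧ b i j = 0))
    (g h : ℝ → ℝ)
    (hg : ∀ s, g s =
      ∑ p ∈ (Finset.range (n+1) ×ˢ Finset.range (n+1)).filter
          (fun p => 1 ≤ p.1 + p.2 ∧ p.1 + p.2 ≤ n),
        a p.1 p.2 * cosh s ^ p.1 * sinh s ^ p.2)
    (hh : ∀ s, h s =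
      ∑ p ∈ (Finset.range (n+1) ×ˢ Finset.range (n+1)).filter
          (fun p => 1 ≤ p.1 + p.2 ∧ p.1 + p.2 ≤ n),
        b p.1 p.2 * cosh s ^ p.2 * sinh s ^ p.1)
    (P : Polynomial ℝ) (hPdeg : P.natDegree ≤ n)
    (hadapt_g : ∀ s : ℝ, (1 - tanh s ^ 2) ^ ((n:ℝ)/2) * g s = P.eval (tanh s))
    (hadapt_h : ∀ s : ℝ, tanh s ≠ 0 →
      (1 - tanh s ^ 2) ^ ((n:ℝ)/2) * h s = tanh s ^ n * P.eval (1 / tanh s))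
    (hg' : ∀ s, g s = 0 → deriv g s ≠ 0)
    (hh' : ∀ s, h s = 0 → deriv h s ≠ 0) :
    {s : ℝ | g s = 0}.Finite ∧ {s : ℝ | h s = 0}.Finite ∧
    {s : ℝ | g s = 0}.ncard + {s : ℝ | h s = 0}.ncard ≤ n := by
  -- basic tanh facts
  have htf : ∀ x : ℝ, tanh x = 1 - 2 / (exp (2*x) + 1) := by
    intro x
    have h1 : (0:ℝ) < exp x := exp_pos x
    have h2 : exp (2*x) = exp x * exp x := by rw [two_mul, exp_add]
    rw [Real.tanh_eq_sinh_div_cosh, Real.sinh_eq, Real.cosh_eq, Real.exp_neg, h2]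
    have h3 : (0:ℝ) < exp x * exp x + 1 := by positivity
    field_simp
    ring
  have hmono : StrictMono tanh := by
    intro x y hxy
    rw [htf x, htf y]
    have h1 : exp (2*x) < exp (2*y) := exp_lt_exp.2 (by linarith)
    have h2 : (0:ℝ) < exp (2*x) + 1 := by positivity
    have : 2 / (exp (2*y) + 1) < 2 / (exp (2*x) + 1) :=
      div_lt_div_of_pos_left (by norm_num) h2 (by linarith)
    linarith
  have hinj : Function.Injective tanh := hmono.injective
  have hbound : ∀ x : ℝ, -1 < tanh x ∧ tanh x < 1 := by
    intro x
    rw [htf]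
    have h1 : (0:ℝ) < exp (2*x) := exp_pos _
    constructor
    · have : 2 / (exp (2*x) + 1) < 2 := by
        rw [div_lt_iff₀ (by linarith)]; nlinarith
      linarith
    · have : 0 < 2 / (exp (2*x) + 1) := by positivity
      linarith
  have hpos : ∀ s : ℝ, (0:ℝ) < (1 - tanh s ^ 2) ^ ((n:ℝ)/2) := by
    intro s
    have h1 := (hbound s).1
    have h2 := (hbound s).2
    have : 0 < 1 - tanh s ^ 2 := by nlinarith
    positivity
  -- g zeros vs P roots
  have hgP : ∀ s, g s = 0 ↔ P.eval (tanh s) = 0 := by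
    intro s
    constructor
    · intro h0; rw [← hadapt_g s, h0, mul_zero]
    · intro h0
      have := hadapt_g s
      rw [h0] at this
      exact (mul_eq_zero.mp this).resolve_left (hpos s).ne'
  have hP0 : P ≠ 0 := by
    intro hP
    have hz : ∀ s, g s = 0 := fun s => (hgP s).2 (by simp [hP])
    have hgeq : g = fun _ => (0:ℝ) := funext hz
    exact hg' 0 (hz 0) (by rw [hgeq]; exact deriv_const 0 0)
  -- the reversed polynomial Q
  set Q : Polynomial ℝ :=
    ∑ k ∈ Finset.range (n+1), Polynomial.C (P.coeff k) * Polynomial.X ^ (n - k) with hQdef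
  have hQeval : ∀ t : ℝ, Q.eval t = ∑ k ∈ Finset.range (n+1), P.coeff k * t ^ (n-k) := by
    intro t
    rw [hQdef, Polynomial.eval_finset_sum]
    simp
  have hQid : ∀ t : ℝ, t ≠ 0 → Q.eval t = t ^ n * P.eval (1/t) := by
    intro t ht
    rw [Polynomial.eval_eq_sum_range' (lt_of_le_of_lt hPdeg (Nat.lt_succ_self n)), hQeval,
      Finset.mul_sum]
    refine Finset.sum_congr rfl fun k hk => ?_
    rw [Finset.mem_range] at hk
    have hkn : k ≤ n := Nat.lt_succ_iff.mp hk
    have hsplit : t ^ n = t ^ (n-k) * t ^ k := by rw [← pow_add]; congr 1; omega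
    rw [hsplit]
    field_simp
    rw [one_div, inv_pow, mul_assoc, mul_inv_cancel₀ (pow_ne_zero _ ht), mul_one]
  -- continuity
  have hcont_tanh : Continuous tanh := by
    have : Real.tanh = fun x => sinh x / cosh x := funext fun x => Real.tanh_eq_sinh_div_cosh x
    rw [this]
    exact Real.continuous_sinh.div Real.continuous_cosh fun x => (Real.cosh_pos x).ne'
  have hcont_h : Continuous h := by
    have : h = fun s => ∑ p ∈ (Finset.range (n+1) ×ˢ Finset.range (n+1)).filter
          (fun p => 1 ≤ p.1 + p.2 ∧ p.1 + p.2 ≤ n),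
        b p.1 p.2 * cosh s ^ p.2 * sinh s ^ p.1 := funext hh
    rw [this]
    exact continuous_finset_sum _ fun p _ => by
      exact ((continuous_const.mul (Real.continuous_cosh.pow _)).mul
        (Real.continuous_sinh.pow _))
  have hcont_lhs : Continuous fun s : ℝ => (1 - tanh s ^ 2) ^ ((n:ℝ)/2) * h s := by
    apply Continuous.mul _ hcont_h
    apply Continuous.rpow_const (continuous_const.sub (hcont_tanh.pow 2))
    intro x
    left
    have h1 := (hbound x).1
    have h2 := (hbound x).2
    show (1:ℝ) - tanh x ^ 2 ≠ 0
    nlinarith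
  -- extend the adapted identity for h to all s
  have hadapt_h' : ∀ s : ℝ, (1 - tanh s ^ 2) ^ ((n:ℝ)/2) * h s = Q.eval (tanh s) := by
    have heq : (fun s : ℝ => (1 - tanh s ^ 2) ^ ((n:ℝ)/2) * h s)
        = fun s : ℝ => Q.eval (tanh s) := by
      apply Continuous.ext_on (dense_compl_singleton (0:ℝ)) hcont_lhs
        (Q.continuous.comp hcont_tanh)
      intro s hs
      have hs0 : s ≠ 0 := hs
      have ht : tanh s ≠ 0 := fun h0 =>
        hs0 (hinj (h0.trans Real.tanh_zero.symm))
      simp only [Function.comp_apply]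
      rw [hadapt_h s ht, hQid _ ht]
    intro s
    exact congrFun heq s
  have hhQ : ∀ s, h s = 0 ↔ Q.eval (tanh s) = 0 := by
    intro s
    constructor
    · intro h0; rw [← hadapt_h' s, h0, mul_zero]
    · intro h0
      have := hadapt_h' s
      rw [h0] at this
      exact (mul_eq_zero.mp this).resolve_left (hpos s).ne'
  have hQ0 : Q ≠ 0 := by
    intro hQ
    have hz : ∀ s, h s = 0 := fun s => (hhQ s).2 (by rw [hQ]; simp)
    have hheq : h = fun _ => (0:ℝ) := funext hz
    exact hh' 0 (hz 0) (by rw [hheq]; exact deriv_const 0 0)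
  -- root sets
  have hSPfin : {x : ℝ | P.eval x = 0}.Finite := Polynomial.finite_setOf_isRoot hP0
  have hSQfin : {x : ℝ | Q.eval x = 0}.Finite := Polynomial.finite_setOf_isRoot hQ0
  have hZg : {s : ℝ | g s = 0} = tanh ⁻¹' {x | P.eval x = 0} := by
    ext s; exact hgP s
  have hZh : {s : ℝ | h s = 0} = tanh ⁻¹' {x | Q.eval x = 0} := by
    ext s; exact hhQ s
  have hZgfin : {s : ℝ | g s = 0}.Finite := by
    rw [hZg]; exact hSPfin.preimage (hinj.injOn)
  have hZhfin : {s : ℝ | h s = 0}.Finite := by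
    rw [hZh]; exact hSQfin.preimage (hinj.injOn)
  refine ⟨hZgfin, hZhfin, ?_⟩
  -- images under tanh
  set Tg : Set ℝ := tanh '' {s | g s = 0} with hTgdef
  set Th : Set ℝ := tanh '' {s | h s = 0} with hThdef
  have hTgfin : Tg.Finite := hZgfin.image _
  have hThfin : Th.Finite := hZhfin.image _
  have hcardg : {s : ℝ | g s = 0}.ncard = Tg.ncard :=
    (Set.ncard_image_of_injective _ hinj).symm
  have hcardh : {s : ℝ | h s = 0}.ncard = Th.ncard :=
    (Set.ncard_image_of_injective _ hinj).symm
  have hTgsub : ∀ x ∈ Tg, P.eval x = 0 ∧ -1 < x ∧ x < 1 := by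
    rintro x ⟨s, hs, rfl⟩
    exact ⟨(hgP s).1 hs, hbound s⟩
  have hThsub : ∀ x ∈ Th, Q.eval x = 0 ∧ -1 < x ∧ x < 1 := by
    rintro x ⟨s, hs, rfl⟩
    exact ⟨(hhQ s).1 hs, hbound s⟩
  set Th' : Set ℝ := Inv.inv '' (Th \ {0}) with hTh'def
  have hTh'fin : Th'.Finite := hThfin.diff.image _
  have hTh'card : (Th \ {0}).ncard = Th'.ncard :=
    (Set.ncard_image_of_injective _ inv_injective).symm
  have hTh'sub : ∀ y ∈ Th', P.eval y = 0 ∧ 1 < |y| := by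
    rintro y ⟨x, ⟨hx, hx0⟩, rfl⟩
    have hx0' : x ≠ 0 := hx0
    obtain ⟨hQx, hb1, hb2⟩ := hThsub x hx
    have habs : |x| < 1 := abs_lt.mpr ⟨hb1, hb2⟩
    have habs0 : 0 < |x| := abs_pos.mpr hx0'
    constructor
    · have := hQid x hx0'
      rw [hQx] at this
      have hPx : P.eval (1/x) = 0 := by
        rcases mul_eq_zero.mp this.symm with hc | hc
        · exact absurd hc (pow_ne_zero _ hx0')
        · exact hc
      rwa [one_div] at hPx
    · rw [abs_inv]
      exact (one_lt_inv₀ habs0).2 habs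
  -- disjoint union inside roots of P
  have hdisj : Disjoint Tg Th' := by
    rw [Set.disjoint_left]
    intro x hxg hxh
    obtain ⟨_, hb1, hb2⟩ := hTgsub x hxg
    obtain ⟨_, habs⟩ := hTh'sub x hxh
    have hlt : |x| < 1 := abs_lt.mpr ⟨hb1, hb2⟩
    linarith
  have hunion_sub : Tg ∪ Th' ⊆ {x : ℝ | P.eval x = 0} := by
    rintro x (hx | hx)
    · exact (hTgsub x hx).1
    · exact (hTh'sub x hx).1
  have hSPcard : {x : ℝ | P.eval x = 0}.ncard ≤ P.natDegree := by
    have hset : {x : ℝ | P.eval x = 0} = ↑P.roots.toFinset := by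
      ext x
      simp [Polynomial.mem_roots, hP0, Polynomial.IsRoot]
    rw [hset, Set.ncard_coe_finset]
    exact le_trans (Multiset.toFinset_card_le _) (Polynomial.card_roots' P)
  have hmain : Tg.ncard + Th'.ncard ≤ P.natDegree := by
    rw [← Set.ncard_union_eq hdisj hTgfin hTh'fin]
    exact le_trans (Set.ncard_le_ncard hunion_sub hSPfin) hSPcard
  -- finish, splitting on whether 0 ∈ Th
  by_cases h0 : (0:ℝ) ∈ Th
  · -- then P.coeff n = 0, so natDegree < n
    have hQz : Q.eval 0 = 0 := (hThsub 0 h0).1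
    have hQ0eval : Q.eval 0 = P.coeff n := by
      rw [hQeval]
      rw [Finset.sum_eq_single n]
      · simp
      · intro k hk hkn
        rw [Finset.mem_range] at hk
        have : n - k ≠ 0 := by omega
        simp [zero_pow this]
      · intro hn; exact absurd (Finset.self_mem_range_succ n) hn
    have hcn : P.coeff n = 0 := by rw [← hQ0eval]; exact hQz
    have hdeg : P.natDegree < n := by
      rcases lt_or_eq_of_le hPdeg with hlt | heq
      · exact hlt
      · exfalso
        apply hP0
        rw [← Polynomial.leadingCoeff_eq_zero, Polynomial.leadingCoeff, heq]
        exact hcn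
    have hThcard : Th.ncard ≤ (Th \ {0}).ncard + 1 := by
      have hsub : Th ⊆ (Th \ {0}) ∪ {0} := by
        intro x hx
        by_cases hx0 : x = 0
        · right; simp [hx0]
        · left; exact ⟨hx, hx0⟩
      calc Th.ncard ≤ ((Th \ {0}) ∪ {0}).ncard :=
            Set.ncard_le_ncard hsub (hThfin.diff.union (Set.finite_singleton _))
        _ ≤ (Th \ {0}).ncard + ({0} : Set ℝ).ncard := Set.ncard_union_le _ _
        _ = (Th \ {0}).ncard + 1 := by rw [Set.ncard_singleton]
    rw [hcardg, hcardh]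
    calc Tg.ncard + Th.ncard ≤ Tg.ncard + ((Th \ {0}).ncard + 1) := by omega
      _ = Tg.ncard + Th'.ncard + 1 := by omega
      _ ≤ P.natDegree + 1 := by omega
      _ ≤ n := by omega
  · have hTheq : Th \ {0} = Th := by
      apply Set.diff_singleton_eq_self
      exact h0
    rw [hcardg, hcardh]
    calc Tg.ncard + Th.ncard = Tg.ncard + Th'.ncard := by rw [← hTh'card, hTheq]
      _ ≤ P.natDegree := hmain
      _ ≤ n := hPdeg
end
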